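/- Let d ≥ 1, let 0 < μ ≤ G_d, let β₁ ∈ [0,1), let D̂ be a real d×d diagonal matrix with diagonal entries in [μ, G_d], let α be real with 0 < α ≤ μ/(2·G_d²), set ρ = 1 − α·μ, and for an integer k ≥ 1 define Γ = (I − (I − α·D̂)^{k+1})·D̂^{−1}. Then for every vector g ∈ ℝ^d, (1/(1 − β₁^k))·⟨g, Γ·g⟩ ≥ ((1 − ρ)/G_d)·‖g‖². -/

import Mathlib

/-!
For diagonal `D̂ = diag(D₁, …, D_d)` the matrix `Γ` is diagonal with entries
`γᵢ = (1 - (1 - α Dᵢ)^{k+1}) / Dᵢ`. The step size condition gives `0 ≤ α Dᵢ ≤ 1`, so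
`(1 - α Dᵢ)^{k+1} ≤ 1 - α Dᵢ` and hence `γᵢ ≥ α ≥ α μ / G_d = (1 - ρ)/G_d`. The quadratic form
of `Γ` is therefore at least `(1 - ρ)/G_d · ‖g‖²`, and the bias-correction factor
`1/(1 - β₁^k)` is at least `1`.
-/

open scoped RealInnerProductSpace

/-- The action of a real `d × d` matrix on `ℝ^d` (Euclidean space). -/
noncomputable def mulV {d : ℕ} (A : Matrix (Fin d) (Fin d) ℝ)
    (v : EuclideanSpace ℝ (Fin d)) : EuclideanSpace ℝ (Fin d) :=
  Matrix.toEuclideanCLM (𝕜 := ℝ) A v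

lemma Matrix.inv_diagonal_of_ne_zero {n K : Type*} [Fintype n] [DecidableEq n] [Field K]
    {v : n → K} (hv : ∀ i, v i ≠ 0) :
    (Matrix.diagonal v)⁻¹ = Matrix.diagonal fun i => (v i)⁻¹ :=
  Matrix.inv_eq_right_inv <| by
    rw [Matrix.diagonal_mul_diagonal, ← Matrix.diagonal_one]
    exact congrArg Matrix.diagonal (funext fun i => mul_inv_cancel₀ (hv i))

lemma Matrix.one_sub_one_sub_smul_diagonal_pow_mul_inv {n K : Type*} [Fintype n] [DecidableEq n]
    [Field K] {v : n → K} (hv : ∀ i, v i ≠ 0) (α : K) (m : ℕ) :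
    (1 - (1 - α • Matrix.diagonal v) ^ m) * (Matrix.diagonal v)⁻¹ =
      Matrix.diagonal fun i => (1 - (1 - α * v i) ^ m) / v i := by
  rw [Matrix.inv_diagonal_of_ne_zero hv, ← Matrix.diagonal_smul, ← Matrix.diagonal_one,
    Matrix.diagonal_sub, Matrix.diagonal_pow, Matrix.diagonal_sub, Matrix.diagonal_mul_diagonal]
  simp only [Pi.pow_apply, Pi.smul_apply, smul_eq_mul, div_eq_mul_inv]

lemma inner_mulV_diagonal {d : ℕ} (γ : Fin d → ℝ) (g : EuclideanSpace ℝ (Fin d)) :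
    ⟪g, mulV (Matrix.diagonal γ) g⟫ = ∑ i, γ i * g i ^ 2 := by
  simp [mulV, EuclideanSpace.inner_eq_star_dotProduct, dotProduct, Matrix.mulVec_diagonal, sq,
    mul_assoc]

lemma mul_norm_sq_le_inner_mulV_diagonal {d : ℕ} {γ : Fin d → ℝ} {c : ℝ} (hγ : ∀ i, c ≤ γ i)
    (g : EuclideanSpace ℝ (Fin d)) :
    c * ‖g‖ ^ 2 ≤ ⟪g, mulV (Matrix.diagonal γ) g⟫ := by
  rw [inner_mulV_diagonal, EuclideanSpace.norm_sq_eq, Finset.mul_sum]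
  simp only [Real.norm_eq_abs, sq_abs]
  gcongr with i
  exact hγ i

lemma le_one_sub_one_sub_pow {R : Type*} [CommRing R] [PartialOrder R] [IsStrictOrderedRing R]
    {x : R} (hx₀ : 0 ≤ x) (hx₁ : x ≤ 1) (n : ℕ) : x ≤ 1 - (1 - x) ^ (n + 1) := by
  calc x = 1 - (1 - x) := (sub_sub_cancel 1 x).symm
    _ ≤ 1 - (1 - x) ^ (n + 1) :=
      sub_le_sub_left (pow_le_of_le_one (sub_nonneg.mpr hx₁) (sub_le_self 1 hx₀) n.succ_ne_zero) 1

lemma le_one_sub_one_sub_mul_pow_div {K : Type*} [Field K] [LinearOrder K] [IsStrictOrderedRing K]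
    {α D : K} (hα : 0 ≤ α) (hD : 0 < D) (hαD : α * D ≤ 1)
    (n : ℕ) : α ≤ (1 - (1 - α * D) ^ (n + 1)) / D := by
  rw [le_div_iff₀ hD]
  exact le_one_sub_one_sub_pow (mul_nonneg hα hD.le) hαD n

theorem stmt13_general (d : ℕ) (μ Gd : ℝ) (hμ : 0 < μ) (hμG : μ ≤ Gd)
    (β₁ : ℝ) (hβ₁ : β₁ ∈ Set.Ico (0 : ℝ) 1)
    (Dh : Matrix (Fin d) (Fin d) ℝ) (hDdiag : Dh.IsDiag)
    (hDbound : ∀ i, Dh i i ∈ Set.Icc μ Gd)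
    (α : ℝ) (hα : 0 < α) (hα2 : α ≤ μ / (2 * Gd ^ 2))
    (ρ : ℝ) (hρ : ρ = 1 - α * μ)
    (k : ℕ) (hk : 1 ≤ k)
    (Γ : Matrix (Fin d) (Fin d) ℝ)
    (hΓ : Γ = (1 - (1 - α • Dh) ^ (k + 1)) * Dh⁻¹) :
    ∀ g : EuclideanSpace ℝ (Fin d),
      ((1 - ρ) / Gd) * ‖g‖ ^ 2 ≤ (1 / (1 - β₁ ^ k)) * ⟪g, mulV Γ g⟫ := by
  intro g
  have hGd : 0 < Gd := hμ.trans_le hμG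
  have hDpos : ∀ i, 0 < Dh.diag i := fun i => hμ.trans_le (hDbound i).1
  have hαGd : α * Gd ≤ 1 := by
    rw [le_div_iff₀ (by positivity)] at hα2
    nlinarith
  have hγ (i : Fin d) : α ≤ (1 - (1 - α * Dh.diag i) ^ (k + 1)) / Dh.diag i :=
    le_one_sub_one_sub_mul_pow_div hα.le (hDpos i)
      ((mul_le_mul_of_nonneg_left (hDbound i).2 hα.le).trans hαGd) k
  have hquad : α * ‖g‖ ^ 2 ≤ ⟪g, mulV Γ g⟫ := by
    rw [hΓ, ← hDdiag.diagonal_diag,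
      Matrix.one_sub_one_sub_smul_diagonal_pow_mul_inv fun i => (hDpos i).ne']
    exact mul_norm_sq_le_inner_mulV_diagonal hγ g
  have hrate : (1 - ρ) / Gd ≤ α := by
    rw [hρ, sub_sub_cancel, div_le_iff₀ hGd]
    exact mul_le_mul_of_nonneg_left hμG hα.le
  have hbias : 1 ≤ 1 / (1 - β₁ ^ k) :=
    one_le_one_div (sub_pos.mpr (pow_lt_one₀ hβ₁.1 hβ₁.2 (by omega)))
      (sub_le_self _ (pow_nonneg hβ₁.1 k))
  calc (1 - ρ) / Gd * ‖g‖ ^ 2 ≤ α * ‖g‖ ^ 2 := by gcongr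
    _ ≤ ⟪g, mulV Γ g⟫ := hquad
    _ ≤ 1 / (1 - β₁ ^ k) * ⟪g, mulV Γ g⟫ :=
      le_mul_of_one_le_left ((by positivity : (0 : ℝ) ≤ α * ‖g‖ ^ 2).trans hquad) hbias

/-- Per-step main descent bound:
`(1/(1-β₁^k))·⟨g, Γ·g⟩ ≥ ((1-ρ)/G_d)·‖g‖²` for `Γ = (I - (I - α·D̂)^{k+1})·D̂⁻¹`
and `ρ = 1 - α·μ`. -/
theorem stmt13 (d : ℕ) (hd : 1 ≤ d) (μ Gd : ℝ) (hμ : 0 < μ) (hμG : μ ≤ Gd)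
    (β₁ : ℝ) (hβ₁ : β₁ ∈ Set.Ico (0 : ℝ) 1)
    (Dh : Matrix (Fin d) (Fin d) ℝ) (hDdiag : Dh.IsDiag)
    (hDbound : ∀ i, Dh i i ∈ Set.Icc μ Gd)
    (α : ℝ) (hα : 0 < α) (hα2 : α ≤ μ / (2 * Gd ^ 2))
    (ρ : ℝ) (hρ : ρ = 1 - α * μ)
    (k : ℕ) (hk : 1 ≤ k)
    (Γ : Matrix (Fin d) (Fin d) ℝ)
    (hΓ : Γ = (1 - (1 - α • Dh) ^ (k + 1)) * Dh⁻¹) :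
    ∀ g : EuclideanSpace ℝ (Fin d),
      ((1 - ρ) / Gd) * ‖g‖ ^ 2 ≤ (1 / (1 - β₁ ^ k)) * ⟪g, mulV Γ g⟫ :=
  stmt13_general d μ Gd hμ hμG β₁ hβ₁ Dh hDdiag hDbound α hα hα2 ρ hρ k hk Γ hΓ
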